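/- arXiv:2211.03574 — 4 statements merged into one kernel-verified Lean document; each statement's English description precedes it below -/
import Mathlib

section
/- Let L > 0. There exists a constant C > 0, depending only on L, such that for every u ∈ C²([0,L]) and every v ∈ C¹([0,L]) with v(L) = 0 one has ∫₀^L (v(x)² + v′(x)²) dx ≤ C [ ∫₀^L (v′(x) + u′(x)²/2)² dx + ( ∫₀^L (u(x)² + u′(x)² + u″(x)²) dx )² ]. -/
/-!
Since `v′ = (v′ + u′²/2) - u′²/2`, we get `∫ v′² ≤ 2 Q + ½ ∫ u′⁴`. The quartic term is bounded by
`sup u′² · ∫ u′²`, and the one-dimensional Sobolev embedding bounds `sup u′²` by the `H¹`-norm of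
`u′`, hence both factors by the `H²`-norm of `u`. Finally `v(L) = 0` gives a Poincaré inequality
`∫ v² ≤ 4 L² ∫ v′²`.
-/

open Set MeasureTheory intervalIntegral

section

variable {a b : ℝ}

lemma integral_mono_of_continuousOn {f g : ℝ → ℝ} (hab : a ≤ b)
    (hf : ContinuousOn f (Icc a b)) (hg : ContinuousOn g (Icc a b))
    (h : ∀ x ∈ Icc a b, f x ≤ g x) : ∫ x in a..b, f x ≤ ∫ x in a..b, g x :=
  integral_mono_on hab (hf.intervalIntegrable_of_Icc hab) (hg.intervalIntegrable_of_Icc hab) h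

lemma continuousOn_of_hasDerivAt {f f' : ℝ → ℝ} {s : Set ℝ}
    (hf : ∀ x ∈ s, HasDerivAt f (f' x) x) : ContinuousOn f s :=
  fun x hx => (hf x hx).continuousAt.continuousWithinAt

/-- Integrate `((x - a) v²)′ = v² + 2 (x - a) v v′`, whose integral vanishes, and absorb the
cross term by AM-GM. -/
lemma integral_sq_le_of_apply_right_eq_zero (hab : a ≤ b) {v v' : ℝ → ℝ}
    (hv : ∀ x ∈ Icc a b, HasDerivAt v (v' x) x) (hv' : ContinuousOn v' (Icc a b))
    (hvb : v b = 0) :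
    ∫ x in a..b, v x ^ 2 ≤ 4 * (b - a) ^ 2 * ∫ x in a..b, v' x ^ 2 := by
  have cv := continuousOn_of_hasDerivAt hv
  have cross : ContinuousOn (fun x => (x - a) * (2 * v x * v' x)) (Icc a b) := by fun_prop
  have hderiv : ∀ x ∈ uIcc a b,
      HasDerivAt (fun t => (t - a) * v t ^ 2) (v x ^ 2 + (x - a) * (2 * v x * v' x)) x := by
    intro x hx
    rw [uIcc_of_le hab] at hx
    exact (((hasDerivAt_id x).sub_const a).mul ((hv x hx).fun_pow 2)).congr_deriv (by
      simp only [id_eq, Nat.cast_ofNat]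
      ring)
  have hzero : ∫ x in a..b, (v x ^ 2 + (x - a) * (2 * v x * v' x)) = 0 := by
    rw [integral_eq_sub_of_hasDerivAt hderiv
      (((cv.fun_pow 2).add cross).intervalIntegrable_of_Icc hab)]
    simp [hvb]
  have iv2 : IntervalIntegrable (fun x => v x ^ 2) volume a b :=
    (cv.fun_pow 2).intervalIntegrable_of_Icc hab
  have iv'2 : IntervalIntegrable (fun x => v' x ^ 2) volume a b :=
    (hv'.fun_pow 2).intervalIntegrable_of_Icc hab
  rw [integral_add iv2 (cross.intervalIntegrable_of_Icc hab)] at hzero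
  have hcross : ∫ x in a..b, -((x - a) * (2 * v x * v' x)) ≤
      ∫ x in a..b, (v x ^ 2 / 2 + 2 * (b - a) ^ 2 * v' x ^ 2) := by
    refine integral_mono_of_continuousOn hab cross.neg (by fun_prop) fun x hx => ?_
    have hxa : (x - a) ^ 2 ≤ (b - a) ^ 2 :=
      pow_le_pow_left₀ (by linarith [hx.1]) (by linarith [hx.2]) 2
    nlinarith [sq_nonneg (v x + 2 * (x - a) * v' x), sq_nonneg (v' x)]
  rw [intervalIntegral.integral_neg, integral_add (iv2.div_const 2) (iv'2.const_mul _),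
    intervalIntegral.integral_div, intervalIntegral.integral_const_mul] at hcross
  linarith

/-- Compare `w(x)²` with the minimum of `w²`, which is at most its mean, via
`(w²)′ = 2 w w′ ≤ w² + w′²`. -/
lemma sq_le_mul_integral_sq_add_sq_deriv (hab : a < b) {w w' : ℝ → ℝ}
    (hw : ∀ x ∈ Icc a b, HasDerivAt w (w' x) x) (hw' : ContinuousOn w' (Icc a b))
    {x : ℝ} (hx : x ∈ Icc a b) :
    w x ^ 2 ≤ (1 / (b - a) + 1) * ∫ t in a..b, (w t ^ 2 + w' t ^ 2) := by
  have cw := continuousOn_of_hasDerivAt hw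
  set N := ∫ t in a..b, (w t ^ 2 + w' t ^ 2)
  have hN : IntervalIntegrable (fun t => w t ^ 2 + w' t ^ 2) volume a b :=
    ((cw.fun_pow 2).add (hw'.fun_pow 2)).intervalIntegrable_of_Icc hab.le
  obtain ⟨y, hy, hmin⟩ := isCompact_Icc.exists_isMinOn (nonempty_Icc.2 hab.le) (cw.fun_pow 2)
  have hy_mean : (b - a) * w y ^ 2 ≤ N := by
    have := integral_mono_of_continuousOn hab.le (continuousOn_const (c := w y ^ 2))
      ((cw.fun_pow 2).add (hw'.fun_pow 2))
      fun t ht => (hmin ht).trans (le_add_of_nonneg_right (sq_nonneg (w' t)))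
    simpa using this
  have hsub : uIcc y x ⊆ uIcc a b := by
    rw [uIcc_of_le hab.le]
    exact uIcc_subset_Icc hy hx
  have hftc : w x ^ 2 - w y ^ 2 = ∫ t in y..x, 2 * w t * w' t := by
    refine (integral_eq_sub_of_hasDerivAt (f := fun t => w t ^ 2) (fun t ht => ?_) ?_).symm
    · exact ((hw t (uIcc_subset_Icc hy hx ht)).fun_pow 2).congr_deriv (by
        simp only [Nat.cast_ofNat]
        ring)
    · exact (((continuousOn_const.mul cw).mul hw').intervalIntegrable_of_Icc hab.le).mono_set hsub
  have hbound : |∫ t in y..x, 2 * w t * w' t| ≤ N :=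
    calc |∫ t in y..x, 2 * w t * w' t|
        ≤ |∫ t in y..x, (w t ^ 2 + w' t ^ 2)| := by
          rw [← Real.norm_eq_abs]
          refine norm_integral_le_abs_of_norm_le (ae_of_all _ fun t => ?_) (hN.mono_set hsub)
          rw [Real.norm_eq_abs, abs_le]
          constructor <;> nlinarith [sq_nonneg (w t - w' t), sq_nonneg (w t + w' t)]
      _ ≤ |N| := abs_integral_mono_interval (uIoc_subset_uIoc_of_uIcc_subset_uIcc hsub)
          (ae_of_all _ fun t => by positivity) hN
      _ = N := abs_of_nonneg (integral_nonneg hab.le fun t _ => by positivity)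
  have hy_le : w y ^ 2 ≤ N / (b - a) := by
    rw [le_div_iff₀ (sub_pos.2 hab)]
    linarith
  rw [add_mul, one_div_mul_eq_div, one_mul]
  linarith [le_abs_self (∫ t in y..x, 2 * w t * w' t)]

lemma integral_pow_four_le_of_hasDerivAt (hab : a < b) {w w' : ℝ → ℝ}
    (hw : ∀ x ∈ Icc a b, HasDerivAt w (w' x) x) (hw' : ContinuousOn w' (Icc a b)) :
    ∫ x in a..b, w x ^ 4 ≤ (1 / (b - a) + 1) * (∫ x in a..b, (w x ^ 2 + w' x ^ 2)) ^ 2 := by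
  have cw := continuousOn_of_hasDerivAt hw
  set M := (1 / (b - a) + 1) * ∫ x in a..b, (w x ^ 2 + w' x ^ 2)
  have hsup : ∀ x ∈ Icc a b, w x ^ 2 ≤ M :=
    fun x hx => sq_le_mul_integral_sq_add_sq_deriv hab hw hw' hx
  calc ∫ x in a..b, w x ^ 4
      ≤ ∫ x in a..b, M * w x ^ 2 :=
        integral_mono_of_continuousOn hab.le (cw.fun_pow 4)
          (continuousOn_const.mul (cw.fun_pow 2))
          fun x hx => by nlinarith [hsup x hx, sq_nonneg (w x)]
    _ = M * ∫ x in a..b, w x ^ 2 := intervalIntegral.integral_const_mul _ _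
    _ ≤ M * ∫ x in a..b, (w x ^ 2 + w' x ^ 2) := by
        gcongr
        · exact (sq_nonneg _).trans (hsup a (left_mem_Icc.2 hab.le))
        · exact integral_mono_of_continuousOn hab.le (cw.fun_pow 2)
            ((cw.fun_pow 2).add (hw'.fun_pow 2)) fun x _ => le_add_of_nonneg_right (sq_nonneg _)
    _ = _ := by ring

end

/-- Lemma 1 of the paper: for `u ∈ C²([0,L])` and `v ∈ C¹([0,L])` with `v(L) = 0`,
the `H¹`-norm of `v` is controlled by `Q(u,v) = ∫ (v′ + u′²/2)²` plus the fourth power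
of the `H²`-norm of `u`, with a constant depending only on `L`. -/
theorem stmt_2 (L : ℝ) (hL : 0 < L) :
    ∃ C > (0:ℝ), ∀ u u' u'' v v' : ℝ → ℝ,
      (∀ x ∈ Set.Icc (0:ℝ) L, HasDerivAt u (u' x) x) →
      (∀ x ∈ Set.Icc (0:ℝ) L, HasDerivAt u' (u'' x) x) →
      (∀ x ∈ Set.Icc (0:ℝ) L, HasDerivAt v (v' x) x) →
      ContinuousOn u'' (Set.Icc (0:ℝ) L) →
      ContinuousOn v' (Set.Icc (0:ℝ) L) →
      v L = 0 →
      (∫ x in (0:ℝ)..L, ((v x) ^ 2 + (v' x) ^ 2)) ≤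
        C * ((∫ x in (0:ℝ)..L, (v' x + (u' x) ^ 2 / 2) ^ 2) +
          (∫ x in (0:ℝ)..L, ((u x) ^ 2 + (u' x) ^ 2 + (u'' x) ^ 2)) ^ 2) := by
  refine ⟨(1 + 4 * L ^ 2) * (2 + 1 / L), by positivity, ?_⟩
  intro u u' u'' v v' hu hu' hv hu'' hv' hvL
  have cu := continuousOn_of_hasDerivAt hu
  have cu' := continuousOn_of_hasDerivAt hu'
  have cv := continuousOn_of_hasDerivAt hv
  set Q := ∫ x in (0:ℝ)..L, (v' x + u' x ^ 2 / 2) ^ 2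
  set H := ∫ x in (0:ℝ)..L, (u x ^ 2 + u' x ^ 2 + u'' x ^ 2)
  have hQ : 0 ≤ Q := integral_nonneg hL.le fun _ _ => sq_nonneg _
  have hv_le : ∫ x in (0:ℝ)..L, v x ^ 2 ≤ 4 * L ^ 2 * ∫ x in (0:ℝ)..L, v' x ^ 2 := by
    simpa using integral_sq_le_of_apply_right_eq_zero hL.le hv hv' hvL
  have hu'_le : ∫ x in (0:ℝ)..L, u' x ^ 4 ≤ (1 / L + 1) * H ^ 2 := by
    refine (integral_pow_four_le_of_hasDerivAt hL hu' hu'').trans ?_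
    rw [sub_zero]
    gcongr
    · exact integral_nonneg hL.le fun _ _ => by positivity
    · exact integral_mono_of_continuousOn hL.le (by fun_prop) (by fun_prop)
        fun x _ => by nlinarith [sq_nonneg (u x)]
  have hv'_le : ∫ x in (0:ℝ)..L, v' x ^ 2 ≤ 2 * Q + (∫ x in (0:ℝ)..L, u' x ^ 4) / 2 := by
    have := integral_mono_of_continuousOn (f := fun x => v' x ^ 2)
      (g := fun x => 2 * (v' x + u' x ^ 2 / 2) ^ 2 + u' x ^ 4 / 2) hL.le (by fun_prop)
      (by fun_prop) fun x _ => by nlinarith [sq_nonneg (v' x + u' x ^ 2)]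
    rwa [intervalIntegral.integral_add
      ((by fun_prop : ContinuousOn _ _).intervalIntegrable_of_Icc hL.le)
      ((by fun_prop : ContinuousOn _ _).intervalIntegrable_of_Icc hL.le),
      intervalIntegral.integral_const_mul, intervalIntegral.integral_div] at this
  rw [intervalIntegral.integral_add ((cv.fun_pow 2).intervalIntegrable_of_Icc hL.le)
    ((hv'.fun_pow 2).intervalIntegrable_of_Icc hL.le)]
  calc (∫ x in (0:ℝ)..L, v x ^ 2) + ∫ x in (0:ℝ)..L, v' x ^ 2
      ≤ (1 + 4 * L ^ 2) * ∫ x in (0:ℝ)..L, v' x ^ 2 := by linarith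
    _ ≤ (1 + 4 * L ^ 2) * (2 * Q + (1 / L + 1) * H ^ 2 / 2) := by gcongr; linarith
    _ ≤ (1 + 4 * L ^ 2) * (2 + 1 / L) * (Q + H ^ 2) := by
        rw [mul_assoc]
        gcongr
        have : 0 ≤ 1 / L := by positivity
        nlinarith [sq_nonneg H]
end

section
/- Let T > 0, 0 < L₀ < L, and β₁, β₂, ρ₁, ρ₂ > 0. Let η ∈ C¹([0,L]) with η(0) = η(L) = 0 and η(L₀) ≤ 0. Let φ, ω : [0,L₀]×[0,T] → ℝ and u, v : [L₀,L]×[0,T] → ℝ be C² functions with φ(L₀,t) = u(L₀,t) and ω(L₀,t) = v(L₀,t) for all t ∈ [0,T]. Then β₁∫₀^T∫₀^{L₀} φ_tt η φ_x dx dt + ρ₁∫₀^T∫₀^{L₀} ω_tt η ω_x dx dt + β₂∫₀^T∫_{L₀}^{L} u_tt η u_x dx dt + ρ₂∫₀^T∫_{L₀}^{L} v_tt η v_x dx dt = (β₁/2)∫₀^T∫₀^{L₀} φ_t² η′ dx dt + (ρ₁/2)∫₀^T∫₀^{L₀} ω_t² η′ dx dt + (β₂/2)∫₀^T∫_{L₀}^{L}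 u_t² η′ dx dt + (ρ₂/2)∫₀^T∫_{L₀}^{L} v_t² η′ dx dt + (β₁ − β₂)(−η(L₀))/2 ∫₀^T u_t(L₀,t)² dt + (ρ₁ − ρ₂)(−η(L₀))/2 ∫₀^T v_t(L₀,t)² dt + [β₁∫₀^{L₀} φ_t η φ_x dx + ρ₁∫₀^{L₀} ω_t η ω_x dx + β₂∫_{L₀}^{L} u_t η u_x dx + ρ₂∫_{L₀}^{L} v_t η v_x dx] evaluated at t = T minus the same expression evaluated at t = 0. -/
open MeasureTheory

/-- Partial derivative in the first (space) variable. -/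
noncomputable def pdx (f : ℝ → ℝ → ℝ) : ℝ → ℝ → ℝ := fun x t => deriv (fun y => f y t) x

/-- Partial derivative in the second (time) variable. -/
noncomputable def pdt (f : ℝ → ℝ → ℝ) : ℝ → ℝ → ℝ := fun x t => deriv (fun s => f x s) t

/-!
With `A = f_t η f_x` and `B = η f_t² / 2`, the product rule and the symmetry `f_xt = f_tx` give
`f_tt η f_x = ∂_t A - ∂_x B + η' f_t² / 2` for each of the four fields. Integrated over a
rectangle, `∂_t A` contributes the values at the times `T` and `0` (Fubini and the fundamental
theorem of calculus) and `∂_x B` the values at the two ends in space. At `x = 0` and `x = L` these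
vanish with `η`; at the interface `x = L₀` the transmission conditions identify `φ_t` with `u_t`
and `ω_t` with `v_t`.
-/

open Set Function

theorem intervalIntegral_integral_swap {E : Type*} [NormedAddCommGroup E] [NormedSpace ℝ E]
    [CompleteSpace E] {P : ℝ → ℝ → E} (hP : Continuous (uncurry P)) (a b c d : ℝ) :
    ∫ t in c..d, ∫ x in a..b, P t x = ∫ x in a..b, ∫ t in c..d, P t x := by
  simp only [intervalIntegral.intervalIntegral_eq_integral_uIoc, integral_smul]
  rw [smul_comm]
  congr 2
  refine integral_integral_swap ?_
  rw [Measure.prod_restrict]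
  exact (hP.continuousOn.integrableOn_compact (isCompact_uIcc.prod isCompact_uIcc)).mono_set
    (prod_mono uIoc_subset_uIcc uIoc_subset_uIcc)

section PartialDerivatives

variable {f : ℝ → ℝ → ℝ} {x t : ℝ}

theorem DifferentiableAt.hasDerivAt_snd_slice (hf : DifferentiableAt ℝ (uncurry f) (x, t)) :
    HasDerivAt (f x ·) (fderiv ℝ (uncurry f) (x, t) (0, 1)) t := by
  simpa [Function.comp_def] using
    hf.hasFDerivAt.comp_hasDerivAt t ((hasDerivAt_const t x).prodMk (hasDerivAt_id t))

theorem DifferentiableAt.hasDerivAt_fst_slice (hf : DifferentiableAt ℝ (uncurry f) (x, t)) :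
    HasDerivAt (f · t) (fderiv ℝ (uncurry f) (x, t) (1, 0)) x := by
  simpa [Function.comp_def] using
    hf.hasFDerivAt.comp_hasDerivAt x ((hasDerivAt_id x).prodMk (hasDerivAt_const x t))

theorem uncurry_pdt_eq (hf : Differentiable ℝ (uncurry f)) :
    uncurry (pdt f) = fun p => fderiv ℝ (uncurry f) p (0, 1) :=
  funext fun p => (hf p).hasDerivAt_snd_slice.deriv

theorem uncurry_pdx_eq (hf : Differentiable ℝ (uncurry f)) :
    uncurry (pdx f) = fun p => fderiv ℝ (uncurry f) p (1, 0) :=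
  funext fun p => (hf p).hasDerivAt_fst_slice.deriv

theorem ContDiff.uncurry_pdt {m n : WithTop ℕ∞} (hf : ContDiff ℝ n (uncurry f))
    (hmn : m + 1 ≤ n) : ContDiff ℝ m (uncurry (pdt f)) := by
  rw [uncurry_pdt_eq (hf.differentiable (by rintro rfl; simp at hmn))]
  exact (hf.fderiv_right hmn).clm_apply contDiff_const

theorem ContDiff.uncurry_pdx {m n : WithTop ℕ∞} (hf : ContDiff ℝ n (uncurry f))
    (hmn : m + 1 ≤ n) : ContDiff ℝ m (uncurry (pdx f)) := by
  rw [uncurry_pdx_eq (hf.differentiable (by rintro rfl; simp at hmn))]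
  exact (hf.fderiv_right hmn).clm_apply contDiff_const

theorem hasDerivAt_pdt (hf : ContDiff ℝ 1 (uncurry f)) (x t : ℝ) :
    HasDerivAt (f x ·) (pdt f x t) t :=
  (hf.differentiable one_ne_zero (x, t)).hasDerivAt_snd_slice.differentiableAt.hasDerivAt

theorem hasDerivAt_pdx (hf : ContDiff ℝ 1 (uncurry f)) (x t : ℝ) :
    HasDerivAt (f · t) (pdx f x t) x :=
  (hf.differentiable one_ne_zero (x, t)).hasDerivAt_fst_slice.differentiableAt.hasDerivAt

theorem pdt_pdx_comm (hf : ContDiff ℝ 2 (uncurry f)) : pdt (pdx f) = pdx (pdt f) := by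
  have hF := hf.differentiable two_ne_zero
  have hF' : Differentiable ℝ (fderiv ℝ (uncurry f)) :=
    (hf.fderiv_right (m := 1) (by norm_num)).differentiable one_ne_zero
  have hpdx : ContDiff ℝ 1 (uncurry (pdx f)) := hf.uncurry_pdx (by norm_num)
  have hpdt : ContDiff ℝ 1 (uncurry (pdt f)) := hf.uncurry_pdt (by norm_num)
  ext x t
  have hsymm := (hf.contDiffAt (x := (x, t))).isSymmSndFDerivAt (by simp) (1, 0) (0, 1)
  change deriv (pdx f x ·) t = deriv (pdt f · t) x
  rw [(hpdx.differentiable one_ne_zero (x, t)).hasDerivAt_snd_slice.deriv,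
    (hpdt.differentiable one_ne_zero (x, t)).hasDerivAt_fst_slice.deriv,
    uncurry_pdx_eq hF, uncurry_pdt_eq hF,
    fderiv_clm_apply (hF' _) (differentiableAt_const _),
    fderiv_clm_apply (hF' _) (differentiableAt_const _)]
  simpa using hsymm.symm

end PartialDerivatives

section RectangleIntegrals

variable {P Q : ℝ → ℝ → ℝ} {a b c d : ℝ}

theorem continuous_intervalIntegral_snd (hP : Continuous (uncurry P)) (a b : ℝ) :
    Continuous fun t => ∫ x in a..b, P x t :=
  intervalIntegral.continuous_parametric_intervalIntegral_of_continuous'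
    (f := fun t x => P x t) (hP.comp continuous_swap) a b

theorem intervalIntegral_integral_add (hP : Continuous (uncurry P)) (hQ : Continuous (uncurry Q)) :
    ∫ t in c..d, ∫ x in a..b, (P x t + Q x t)
      = (∫ t in c..d, ∫ x in a..b, P x t) + ∫ t in c..d, ∫ x in a..b, Q x t := by
  have slice {R : ℝ → ℝ → ℝ} (hR : Continuous (uncurry R)) (t : ℝ) :
      IntervalIntegrable (R · t) volume a b :=
    (hR.comp (continuous_id.prodMk continuous_const)).intervalIntegrable a b
  simp_rw [intervalIntegral.integral_add (slice hP _) (slice hQ _)]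
  exact intervalIntegral.integral_add
    ((continuous_intervalIntegral_snd hP a b).intervalIntegrable c d)
    ((continuous_intervalIntegral_snd hQ a b).intervalIntegrable c d)

theorem intervalIntegral_integral_add_eq_of_hasDerivAt {A B A' B' : ℝ → ℝ → ℝ}
    (hA : ∀ x t, HasDerivAt (A x ·) (A' x t) t) (hB : ∀ x t, HasDerivAt (B · t) (B' x t) x)
    (hA' : Continuous (uncurry A')) (hB' : Continuous (uncurry B')) :
    ∫ t in c..d, ∫ x in a..b, (A' x t + B' x t)
      = (∫ x in a..b, (A x d - A x c)) + ∫ t in c..d, (B b t - B a t) := by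
  rw [intervalIntegral_integral_add hA' hB',
    intervalIntegral_integral_swap (P := fun t x => A' x t) (hA'.comp continuous_swap)]
  congr 1
  · refine intervalIntegral.integral_congr fun x _ => ?_
    exact intervalIntegral.integral_eq_sub_of_hasDerivAt (fun t _ => hA x t)
      ((hA'.comp (continuous_const.prodMk continuous_id)).intervalIntegrable c d)
  · refine intervalIntegral.integral_congr fun t _ => ?_
    exact intervalIntegral.integral_eq_sub_of_hasDerivAt (fun x _ => hB x t)
      ((hB'.comp (continuous_id.prodMk continuous_const)).intervalIntegrable a b)

end RectangleIntegrals

theorem intervalIntegral_integral_pdt_pdt_mul_mul_pdx {f : ℝ → ℝ → ℝ} {η : ℝ → ℝ}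
    (hf : ContDiff ℝ 2 (uncurry f)) (hη : ContDiff ℝ 1 η) (a b c d : ℝ) :
    ∫ t in c..d, ∫ x in a..b, pdt (pdt f) x t * η x * pdx f x t
      = (∫ t in c..d, ∫ x in a..b, pdt f x t ^ 2 * deriv η x) / 2
        + (η a * ∫ t in c..d, pdt f a t ^ 2) / 2 - (η b * ∫ t in c..d, pdt f b t ^ 2) / 2
        + ((∫ x in a..b, pdt f x d * η x * pdx f x d)
          - ∫ x in a..b, pdt f x c * η x * pdx f x c) := by
  have hft : ContDiff ℝ 1 (uncurry (pdt f)) := hf.uncurry_pdt (by norm_num)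
  have hfx : ContDiff ℝ 1 (uncurry (pdx f)) := hf.uncurry_pdx (by norm_num)
  have cft : Continuous fun p : ℝ × ℝ => pdt f p.1 p.2 := hft.continuous
  have cfx : Continuous fun p : ℝ × ℝ => pdx f p.1 p.2 := hfx.continuous
  have cftt : Continuous fun p : ℝ × ℝ => pdt (pdt f) p.1 p.2 :=
    (hft.uncurry_pdt (zero_add 1).le).continuous
  have cftx : Continuous fun p : ℝ × ℝ => pdx (pdt f) p.1 p.2 :=
    (hft.uncurry_pdx (zero_add 1).le).continuous
  have cη : Continuous η := hη.continuous
  have cη' : Continuous (deriv η) := hη.continuous_deriv le_rfl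
  have hA (x t : ℝ) : HasDerivAt (fun s => pdt f x s * η x * pdx f x s)
      (pdt (pdt f) x t * η x * pdx f x t + pdt f x t * η x * pdx (pdt f) x t) t := by
    rw [← pdt_pdx_comm hf]
    exact ((hasDerivAt_pdt hft x t).mul_const (η x)).mul (hasDerivAt_pdt hfx x t)
  have hB (x t : ℝ) : HasDerivAt (fun y => -(η y * pdt f y t ^ 2) / 2)
      (-(deriv η x * pdt f x t ^ 2 + η x * (2 * pdt f x t * pdx (pdt f) x t)) / 2) x := by
    refine (((hη.differentiable one_ne_zero x).hasDerivAt.fun_mul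
      ((hasDerivAt_pdx hft x t).fun_pow 2)).fun_neg.div_const 2).congr_deriv ?_
    norm_num
  have hsplit (x t : ℝ) : pdt (pdt f) x t * η x * pdx f x t
      = ((pdt (pdt f) x t * η x * pdx f x t + pdt f x t * η x * pdx (pdt f) x t)
        + -(deriv η x * pdt f x t ^ 2 + η x * (2 * pdt f x t * pdx (pdt f) x t)) / 2)
        + pdt f x t ^ 2 * deriv η x / 2 := by ring
  conv_lhs => enter [1, t, 1, x]; rw [hsplit]
  rw [intervalIntegral_integral_add (by fun_prop) (by fun_prop),
    intervalIntegral_integral_add_eq_of_hasDerivAt hA hB (by fun_prop) (by fun_prop),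
    intervalIntegral.integral_sub ((by fun_prop : Continuous _).intervalIntegrable _ _)
      ((by fun_prop : Continuous _).intervalIntegrable _ _),
    intervalIntegral.integral_sub ((by fun_prop : Continuous _).intervalIntegrable _ _)
      ((by fun_prop : Continuous _).intervalIntegrable _ _)]
  simp only [intervalIntegral.integral_div, intervalIntegral.integral_neg,
    intervalIntegral.integral_const_mul]
  ring

theorem eqOn_pdt_of_eqOn {f g : ℝ → ℝ → ℝ} {x c d : ℝ} (hfg : EqOn (f x) (g x) (Icc c d)) :
    EqOn (pdt f x) (pdt g x) (Ioo c d) :=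
  (hfg.mono Ioo_subset_Icc_self).deriv isOpen_Ioo

theorem stmt_6_general (T L₀ L β₁ β₂ ρ₁ ρ₂ : ℝ)
    (hT : 0 < T)
    (η : ℝ → ℝ) (hη : ContDiff ℝ 1 η)
    (hη0 : η 0 = 0) (hηL : η L = 0)
    (φ ω u v : ℝ → ℝ → ℝ)
    (hφ : ContDiff ℝ 2 (Function.uncurry φ))
    (hω : ContDiff ℝ 2 (Function.uncurry ω))
    (hu : ContDiff ℝ 2 (Function.uncurry u))
    (hv : ContDiff ℝ 2 (Function.uncurry v))
    (htr1 : ∀ t ∈ Set.Icc (0:ℝ) T, φ L₀ t = u L₀ t)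
    (htr2 : ∀ t ∈ Set.Icc (0:ℝ) T, ω L₀ t = v L₀ t)
    (F : ℝ → ℝ)
    (hF : ∀ t : ℝ, F t =
      β₁ * (∫ x in (0:ℝ)..L₀, pdt φ x t * η x * pdx φ x t)
      + ρ₁ * (∫ x in (0:ℝ)..L₀, pdt ω x t * η x * pdx ω x t)
      + β₂ * (∫ x in L₀..L, pdt u x t * η x * pdx u x t)
      + ρ₂ * (∫ x in L₀..L, pdt v x t * η x * pdx v x t)) :
    β₁ * (∫ t in (0:ℝ)..T, (∫ x in (0:ℝ)..L₀, pdt (pdt φ) x t * η x * pdx φ x t))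
      + ρ₁ * (∫ t in (0:ℝ)..T, (∫ x in (0:ℝ)..L₀, pdt (pdt ω) x t * η x * pdx ω x t))
      + β₂ * (∫ t in (0:ℝ)..T, (∫ x in L₀..L, pdt (pdt u) x t * η x * pdx u x t))
      + ρ₂ * (∫ t in (0:ℝ)..T, (∫ x in L₀..L, pdt (pdt v) x t * η x * pdx v x t))
    = (β₁ / 2) * (∫ t in (0:ℝ)..T, (∫ x in (0:ℝ)..L₀, (pdt φ x t) ^ 2 * deriv η x))
      + (ρ₁ / 2) * (∫ t in (0:ℝ)..T, (∫ x in (0:ℝ)..L₀, (pdt ω x t) ^ 2 * deriv η x))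
      + (β₂ / 2) * (∫ t in (0:ℝ)..T, (∫ x in L₀..L, (pdt u x t) ^ 2 * deriv η x))
      + (ρ₂ / 2) * (∫ t in (0:ℝ)..T, (∫ x in L₀..L, (pdt v x t) ^ 2 * deriv η x))
      + (β₁ - β₂) * (-η L₀) / 2 * (∫ t in (0:ℝ)..T, (pdt u L₀ t) ^ 2)
      + (ρ₁ - ρ₂) * (-η L₀) / 2 * (∫ t in (0:ℝ)..T, (pdt v L₀ t) ^ 2)
      + (F T - F 0) := by
  have hφu : ∫ t in (0:ℝ)..T, pdt φ L₀ t ^ 2 = ∫ t in (0:ℝ)..T, pdt u L₀ t ^ 2 :=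
    intervalIntegral.integral_congr_Ioo_of_le hT.le fun t ht => by
      rw [eqOn_pdt_of_eqOn htr1 ht]
  have hωv : ∫ t in (0:ℝ)..T, pdt ω L₀ t ^ 2 = ∫ t in (0:ℝ)..T, pdt v L₀ t ^ 2 :=
    intervalIntegral.integral_congr_Ioo_of_le hT.le fun t ht => by
      rw [eqOn_pdt_of_eqOn htr2 ht]
  rw [intervalIntegral_integral_pdt_pdt_mul_mul_pdx hφ hη,
    intervalIntegral_integral_pdt_pdt_mul_mul_pdx hω hη,
    intervalIntegral_integral_pdt_pdt_mul_mul_pdx hu hη,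
    intervalIntegral_integral_pdt_pdt_mul_mul_pdx hv hη, hφu, hωv, hF T, hF 0, hη0, hηL]
  ring

/-- Multiplier identity for the inertial terms in the proof of asymptotic smoothness
of the transmission beam system. -/
theorem stmt_6 (T L₀ L β₁ β₂ ρ₁ ρ₂ : ℝ)
    (hT : 0 < T) (hL₀ : 0 < L₀) (hL : L₀ < L)
    (hβ₁ : 0 < β₁) (hβ₂ : 0 < β₂) (hρ₁ : 0 < ρ₁) (hρ₂ : 0 < ρ₂)
    (η : ℝ → ℝ) (hη : ContDiff ℝ 1 η)
    (hη0 : η 0 = 0) (hηL : η L = 0) (hηL₀ : η L₀ ≤ 0)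
    (φ ω u v : ℝ → ℝ → ℝ)
    (hφ : ContDiff ℝ 2 (Function.uncurry φ))
    (hω : ContDiff ℝ 2 (Function.uncurry ω))
    (hu : ContDiff ℝ 2 (Function.uncurry u))
    (hv : ContDiff ℝ 2 (Function.uncurry v))
    (htr1 : ∀ t ∈ Set.Icc (0:ℝ) T, φ L₀ t = u L₀ t)
    (htr2 : ∀ t ∈ Set.Icc (0:ℝ) T, ω L₀ t = v L₀ t)
    (F : ℝ → ℝ)
    (hF : ∀ t : ℝ, F t =
      β₁ * (∫ x in (0:ℝ)..L₀, pdt φ x t * η x * pdx φ x t)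
      + ρ₁ * (∫ x in (0:ℝ)..L₀, pdt ω x t * η x * pdx ω x t)
      + β₂ * (∫ x in L₀..L, pdt u x t * η x * pdx u x t)
      + ρ₂ * (∫ x in L₀..L, pdt v x t * η x * pdx v x t)) :
    β₁ * (∫ t in (0:ℝ)..T, (∫ x in (0:ℝ)..L₀, pdt (pdt φ) x t * η x * pdx φ x t))
      + ρ₁ * (∫ t in (0:ℝ)..T, (∫ x in (0:ℝ)..L₀, pdt (pdt ω) x t * η x * pdx ω x t))
      + β₂ * (∫ t in (0:ℝ)..T, (∫ x in L₀..L, pdt (pdt u) x t * η x * pdx u x t))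
      + ρ₂ * (∫ t in (0:ℝ)..T, (∫ x in L₀..L, pdt (pdt v) x t * η x * pdx v x t))
    = (β₁ / 2) * (∫ t in (0:ℝ)..T, (∫ x in (0:ℝ)..L₀, (pdt φ x t) ^ 2 * deriv η x))
      + (ρ₁ / 2) * (∫ t in (0:ℝ)..T, (∫ x in (0:ℝ)..L₀, (pdt ω x t) ^ 2 * deriv η x))
      + (β₂ / 2) * (∫ t in (0:ℝ)..T, (∫ x in L₀..L, (pdt u x t) ^ 2 * deriv η x))
      + (ρ₂ / 2) * (∫ t in (0:ℝ)..T, (∫ x in L₀..L, (pdt v x t) ^ 2 * deriv η x))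
      + (β₁ - β₂) * (-η L₀) / 2 * (∫ t in (0:ℝ)..T, (pdt u L₀ t) ^ 2)
      + (ρ₁ - ρ₂) * (-η L₀) / 2 * (∫ t in (0:ℝ)..T, (pdt v L₀ t) ^ 2)
      + (F T - F 0) :=
  stmt_6_general T L₀ L β₁ β₂ ρ₁ ρ₂ hT η hη hη0 hηL φ ω u v hφ hω hu hv htr1 htr2 F hF
end

section
/- Let T > 0, 0 < L₀ < L, and λ₁, λ₂ > 0. Let η ∈ C²([0,L]) with η(0) = η(L) = 0 and η(L₀) ≤ 0. Let φ : [0,L₀]×[0,T] → ℝ and u : [L₀,L]×[0,T] → ℝ be functions that are C³ in x and continuous in t, and assume φ_x(0,t) = 0, u_xx(L,t) = 0, φ_x(L₀,t) = u_x(L₀,t), and λ₁φ_xx(L₀,t) = λ₂u_xx(L₀,t) for all t ∈ [0,T]. Then −λ₁∫₀^T∫₀^{L₀} φ_xxx (η φ_xx + η′ φ_x) dx dt − λ₂∫₀^T∫_{L₀}^{L} u_xxx (η u_xx + η′ u_x) dx dt = (3λ₁/2)∫₀^T∫₀^{L₀} φ_xx² η′ dx dt + (3λ₂/2)∫₀^T∫_{L₀}^{L}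 u_xx² η′ dx dt + λ₂(λ₂ − λ₁)(−η(L₀))/(2λ₁) ∫₀^T u_xx(L₀,t)² dt + λ₁∫₀^T∫₀^{L₀} φ_xx η″ φ_x dx dt + λ₂∫₀^T∫_{L₀}^{L} u_xx η″ u_x dx dt. -/
/-!
Integrating by parts in `x`, `w‴ (η w″ + η′ w′)` is the derivative of the flux
`η w″² / 2 + η′ w″ w′` minus `(3/2) w″² η′ + w″ η″ w′`. On each beam this turns the bending
term into interior integrals plus fluxes at the ends. The fluxes at `0` and `L` vanish because
`η(0) = η(L) = 0` and `φ_x(0) = u_xx(L) = 0`. At `L₀` the transmission conditions cancel the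
`η′` parts of the two fluxes and turn their `η` parts into the jump
`λ₂(λ₂ − λ₁)(−η(L₀)) u_xx(L₀)² / (2λ₁)`. Integrating the resulting identity in `t` gives the claim.
-/

open MeasureTheory

section BendingMultiplier

variable {η w : ℝ → ℝ}

theorem hasDerivAt_bending_flux (hη : ContDiff ℝ 2 η) (hw : ContDiff ℝ 3 w) (x : ℝ) :
    HasDerivAt
      (fun x => η x * deriv (deriv w) x ^ 2 / 2 + deriv η x * deriv (deriv w) x * deriv w x)
      (deriv (deriv (deriv w)) x * (η x * deriv (deriv w) x + deriv η x * deriv w x)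
        + 3 / 2 * (deriv (deriv w) x ^ 2 * deriv η x)
        + deriv (deriv w) x * deriv (deriv η) x * deriv w x) x := by
  have hη₁ : HasDerivAt η (deriv η x) x := (hη.differentiable (by norm_num) x).hasDerivAt
  have hη₂ : HasDerivAt (deriv η) (deriv (deriv η) x) x :=
    (hη.differentiable_deriv_two x).hasDerivAt
  have hw₂ : HasDerivAt (deriv w) (deriv (deriv w) x) x :=
    ((hw.of_le (by norm_num)).differentiable_deriv_two x).hasDerivAt
  have hw₃ : HasDerivAt (deriv (deriv w)) (deriv (deriv (deriv w)) x) x :=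
    ((show ContDiff ℝ (2 + 1) w from hw).deriv'.differentiable_deriv_two x).hasDerivAt
  refine (((hη₁.mul (hw₃.pow 2)).div_const 2).add ((hη₂.mul hw₃).mul hw₂)).congr_deriv ?_
  simp only [Pi.mul_apply, Pi.pow_apply]
  ring

theorem integral_deriv3_mul_bending_multiplier (hη : ContDiff ℝ 2 η) (hw : ContDiff ℝ 3 w)
    (a b : ℝ) :
    ∫ x in a..b, deriv (deriv (deriv w)) x * (η x * deriv (deriv w) x + deriv η x * deriv w x)
      = (η b * deriv (deriv w) b ^ 2 / 2 + deriv η b * deriv (deriv w) b * deriv w b)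
        - (η a * deriv (deriv w) a ^ 2 / 2 + deriv η a * deriv (deriv w) a * deriv w a)
        - 3 / 2 * (∫ x in a..b, deriv (deriv w) x ^ 2 * deriv η x)
        - ∫ x in a..b, deriv (deriv w) x * deriv (deriv η) x * deriv w x := by
  have : Continuous (deriv η) := hη.continuous_deriv (by norm_num)
  have : Continuous (deriv (deriv η)) := (hη.deriv' (n := 1)).continuous_deriv le_rfl
  have : Continuous (deriv w) := hw.continuous_deriv (by norm_num)
  have : Continuous (deriv (deriv w)) := (hw.deriv' (n := 2)).continuous_deriv (by norm_num)
  have : Continuous (deriv (deriv (deriv w))) :=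
    ((hw.deriv' (n := 2)).deriv' (n := 1)).continuous_deriv le_rfl
  have ftc := intervalIntegral.integral_eq_sub_of_hasDerivAt
    (fun x _ => hasDerivAt_bending_flux hη hw x) (Continuous.intervalIntegrable (by fun_prop) a b)
  simp (disch := exact Continuous.intervalIntegrable (by fun_prop) _ _) only
    [intervalIntegral.integral_add, intervalIntegral.integral_const_mul] at ftc
  linarith

end BendingMultiplier

theorem integral_pdx3_mul_bending_multiplier {η : ℝ → ℝ} (hη : ContDiff ℝ 2 η)
    {f : ℝ → ℝ → ℝ} {t : ℝ} (hf : ContDiff ℝ 3 fun x => f x t) (a b : ℝ) :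
    ∫ x in a..b, pdx (pdx (pdx f)) x t * (η x * pdx (pdx f) x t + deriv η x * pdx f x t)
      = (η b * pdx (pdx f) b t ^ 2 / 2 + deriv η b * pdx (pdx f) b t * pdx f b t)
        - (η a * pdx (pdx f) a t ^ 2 / 2 + deriv η a * pdx (pdx f) a t * pdx f a t)
        - 3 / 2 * (∫ x in a..b, pdx (pdx f) x t ^ 2 * deriv η x)
        - ∫ x in a..b, pdx (pdx f) x t * deriv (deriv η) x * pdx f x t :=
  integral_deriv3_mul_bending_multiplier hη hf a b

theorem transmission_flux_jump {l₁ l₂ e d a b p q : ℝ} (hl₁ : l₁ ≠ 0) (hslope : p = q)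
    (hmoment : l₁ * a = l₂ * b) :
    -l₁ * (e * a ^ 2 / 2 + d * a * p) + l₂ * (e * b ^ 2 / 2 + d * b * q)
      = l₂ * (l₂ - l₁) * (-e) / (2 * l₁) * b ^ 2 := by
  subst hslope
  field_simp
  linear_combination (-(e * (l₁ * a + l₂ * b)) - 2 * l₁ * d * p) * hmoment

theorem bending_multiplier_transmission_slice {lam₁ lam₂ L₀ L t : ℝ} {η : ℝ → ℝ}
    {φ u : ℝ → ℝ → ℝ} (hlam₁ : lam₁ ≠ 0) (hη : ContDiff ℝ 2 η) (hη0 : η 0 = 0) (hηL : η L = 0)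
    (hφ : ContDiff ℝ 3 fun x => φ x t) (hu : ContDiff ℝ 3 fun x => u x t)
    (hbc1 : pdx φ 0 t = 0) (hbc2 : pdx (pdx u) L t = 0) (htr1 : pdx φ L₀ t = pdx u L₀ t)
    (htr2 : lam₁ * pdx (pdx φ) L₀ t = lam₂ * pdx (pdx u) L₀ t) :
    -lam₁ * (∫ x in (0:ℝ)..L₀,
        pdx (pdx (pdx φ)) x t * (η x * pdx (pdx φ) x t + deriv η x * pdx φ x t))
      - lam₂ * (∫ x in L₀..L,
        pdx (pdx (pdx u)) x t * (η x * pdx (pdx u) x t + deriv η x * pdx u x t))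
    = (3 * lam₁ / 2) * (∫ x in (0:ℝ)..L₀, (pdx (pdx φ) x t) ^ 2 * deriv η x)
      + (3 * lam₂ / 2) * (∫ x in L₀..L, (pdx (pdx u) x t) ^ 2 * deriv η x)
      + lam₂ * (lam₂ - lam₁) * (-η L₀) / (2 * lam₁) * (pdx (pdx u) L₀ t) ^ 2
      + lam₁ * (∫ x in (0:ℝ)..L₀, pdx (pdx φ) x t * deriv (deriv η) x * pdx φ x t)
      + lam₂ * (∫ x in L₀..L, pdx (pdx u) x t * deriv (deriv η) x * pdx u x t) := by
  rw [integral_pdx3_mul_bending_multiplier hη hφ, integral_pdx3_mul_bending_multiplier hη hu,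
    hη0, hηL, hbc1, hbc2]
  linear_combination transmission_flux_jump (e := η L₀) (d := deriv η L₀) hlam₁ htr1 htr2

theorem stmt_8_general (T L₀ L lam₁ lam₂ : ℝ)
    (hT : 0 < T)
    (hlam₁ : 0 < lam₁)
    (η : ℝ → ℝ) (hη : ContDiff ℝ 2 η)
    (hη0 : η 0 = 0) (hηL : η L = 0)
    (φ u : ℝ → ℝ → ℝ)
    -- C³ in x
    (hφx : ∀ t : ℝ, ContDiff ℝ 3 (fun x => φ x t))
    (hux : ∀ t : ℝ, ContDiff ℝ 3 (fun x => u x t))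
    -- joint continuity of the function and its spatial derivatives up to order 3
    (hφc1 : Continuous (Function.uncurry (pdx φ)))
    (hφc2 : Continuous (Function.uncurry (pdx (pdx φ))))
    (hφc3 : Continuous (Function.uncurry (pdx (pdx (pdx φ)))))
    (huc1 : Continuous (Function.uncurry (pdx u)))
    (huc2 : Continuous (Function.uncurry (pdx (pdx u))))
    (huc3 : Continuous (Function.uncurry (pdx (pdx (pdx u)))))
    -- boundary and transmission conditions
    (hbc1 : ∀ t ∈ Set.Icc (0:ℝ) T, pdx φ 0 t = 0)
    (hbc2 : ∀ t ∈ Set.Icc (0:ℝ) T, pdx (pdx u) L t = 0)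
    (htr1 : ∀ t ∈ Set.Icc (0:ℝ) T, pdx φ L₀ t = pdx u L₀ t)
    (htr2 : ∀ t ∈ Set.Icc (0:ℝ) T, lam₁ * pdx (pdx φ) L₀ t = lam₂ * pdx (pdx u) L₀ t) :
    -lam₁ * (∫ t in (0:ℝ)..T, (∫ x in (0:ℝ)..L₀,
        pdx (pdx (pdx φ)) x t * (η x * pdx (pdx φ) x t + deriv η x * pdx φ x t)))
      - lam₂ * (∫ t in (0:ℝ)..T, (∫ x in L₀..L,
        pdx (pdx (pdx u)) x t * (η x * pdx (pdx u) x t + deriv η x * pdx u x t)))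
    = (3 * lam₁ / 2) * (∫ t in (0:ℝ)..T, (∫ x in (0:ℝ)..L₀,
          (pdx (pdx φ) x t) ^ 2 * deriv η x))
      + (3 * lam₂ / 2) * (∫ t in (0:ℝ)..T, (∫ x in L₀..L,
          (pdx (pdx u) x t) ^ 2 * deriv η x))
      + lam₂ * (lam₂ - lam₁) * (-η L₀) / (2 * lam₁) *
          (∫ t in (0:ℝ)..T, (pdx (pdx u) L₀ t) ^ 2)
      + lam₁ * (∫ t in (0:ℝ)..T, (∫ x in (0:ℝ)..L₀,
          pdx (pdx φ) x t * deriv (deriv η) x * pdx φ x t))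
      + lam₂ * (∫ t in (0:ℝ)..T, (∫ x in L₀..L,
          pdx (pdx u) x t * deriv (deriv η) x * pdx u x t)) := by
  have : Continuous η := hη.continuous
  have : Continuous (deriv η) := hη.continuous_deriv (by norm_num)
  have : Continuous (deriv (deriv η)) := (hη.deriv' (n := 1)).continuous_deriv le_rfl
  have integrated := intervalIntegral.integral_congr (μ := volume) (a := 0) (b := T)
    fun t ht =>
      have ht : t ∈ Set.Icc 0 T := Set.uIcc_of_le hT.le ▸ ht
      bending_multiplier_transmission_slice hlam₁.ne' hη hη0 hηL (hφx t) (hux t)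
        (hbc1 t ht) (hbc2 t ht) (htr1 t ht) (htr2 t ht)
  -- `simp` runs its discharger at reducible transparency, where `fun_prop` cannot see through
  -- the `Function.uncurry` in the continuity hypotheses.
  simp (disch := with_unfolding_all (apply Continuous.intervalIntegrable; fun_prop)) only
    [intervalIntegral.integral_add, intervalIntegral.integral_sub,
      intervalIntegral.integral_const_mul] at integrated
  exact integrated

/-- Multiplier identity for the bending terms in the proof of asymptotic smoothness
of the transmission beam system; the jump coefficient `λ₂(λ₂ − λ₁)/(2λ₁)` arises from
the transmission condition `λ₁φ_xx(L₀,t) = λ₂u_xx(L₀,t)`. -/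
theorem stmt_8 (T L₀ L lam₁ lam₂ : ℝ)
    (hT : 0 < T) (hL₀ : 0 < L₀) (hL : L₀ < L)
    (hlam₁ : 0 < lam₁) (hlam₂ : 0 < lam₂)
    (η : ℝ → ℝ) (hη : ContDiff ℝ 2 η)
    (hη0 : η 0 = 0) (hηL : η L = 0) (hηL₀ : η L₀ ≤ 0)
    (φ u : ℝ → ℝ → ℝ)
    -- C³ in x
    (hφx : ∀ t : ℝ, ContDiff ℝ 3 (fun x => φ x t))
    (hux : ∀ t : ℝ, ContDiff ℝ 3 (fun x => u x t))
    -- joint continuity of the function and its spatial derivatives up to order 3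
    (hφc : Continuous (Function.uncurry φ))
    (hφc1 : Continuous (Function.uncurry (pdx φ)))
    (hφc2 : Continuous (Function.uncurry (pdx (pdx φ))))
    (hφc3 : Continuous (Function.uncurry (pdx (pdx (pdx φ)))))
    (huc : Continuous (Function.uncurry u))
    (huc1 : Continuous (Function.uncurry (pdx u)))
    (huc2 : Continuous (Function.uncurry (pdx (pdx u))))
    (huc3 : Continuous (Function.uncurry (pdx (pdx (pdx u)))))
    -- boundary and transmission conditions
    (hbc1 : ∀ t ∈ Set.Icc (0:ℝ) T, pdx φ 0 t = 0)
    (hbc2 : ∀ t ∈ Set.Icc (0:ℝ) T, pdx (pdx u) L t = 0)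
    (htr1 : ∀ t ∈ Set.Icc (0:ℝ) T, pdx φ L₀ t = pdx u L₀ t)
    (htr2 : ∀ t ∈ Set.Icc (0:ℝ) T, lam₁ * pdx (pdx φ) L₀ t = lam₂ * pdx (pdx u) L₀ t) :
    -lam₁ * (∫ t in (0:ℝ)..T, (∫ x in (0:ℝ)..L₀,
        pdx (pdx (pdx φ)) x t * (η x * pdx (pdx φ) x t + deriv η x * pdx φ x t)))
      - lam₂ * (∫ t in (0:ℝ)..T, (∫ x in L₀..L,
        pdx (pdx (pdx u)) x t * (η x * pdx (pdx u) x t + deriv η x * pdx u x t)))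
    = (3 * lam₁ / 2) * (∫ t in (0:ℝ)..T, (∫ x in (0:ℝ)..L₀,
          (pdx (pdx φ) x t) ^ 2 * deriv η x))
      + (3 * lam₂ / 2) * (∫ t in (0:ℝ)..T, (∫ x in L₀..L,
          (pdx (pdx u) x t) ^ 2 * deriv η x))
      + lam₂ * (lam₂ - lam₁) * (-η L₀) / (2 * lam₁) *
          (∫ t in (0:ℝ)..T, (pdx (pdx u) L₀ t) ^ 2)
      + lam₁ * (∫ t in (0:ℝ)..T, (∫ x in (0:ℝ)..L₀,
          pdx (pdx φ) x t * deriv (deriv η) x * pdx φ x t))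
      + lam₂ * (∫ t in (0:ℝ)..T, (∫ x in L₀..L,
          pdx (pdx u) x t * deriv (deriv η) x * pdx u x t)) :=
  stmt_8_general T L₀ L lam₁ lam₂ hT hlam₁ η hη hη0 hηL φ u hφx hux hφc1 hφc2 hφc3 huc1 huc2 huc3
    hbc1 hbc2 htr1 htr2
end

section
/- Fix 0 < L₀ < L and positive constants λ₁, λ₂, and let g₁ ∈ C([0,L₀]), g₃ ∈ C([L₀,L]). Let φ, ω : [0,L₀] → ℝ and u, v : [L₀,L] → ℝ be smooth functions satisfying the stationary transmission system: λ₁φ⁗ − [φ′(ω′ + φ′²/2)]′ = g₁ and (ω′ + φ′²/2)′ = 0 on (0,L₀); λ₂u⁗ − [u′(v′ + u′²/2)]′ = g₃ and (v′ + u′²/2)′ = 0 on (L₀,L); with boundary conditions φ(0) = φ′(0) = ω(0) = 0, u(L) = u″(L) = v(L) = 0 and transmission conditions φ(L₀) = u(L₀), ω(L₀) = v(L₀), φ′(L₀) = u′(L₀), λ₁φ″(L₀) = λ₂u″(L₀), ω′(L₀) = v′(L₀), λ₁φ‴(L₀) = λ₂u‴(L₀). Then there exists a constant C > 0, depending only on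 λ₁, λ₂, L₀, L, such that λ₁∫₀^{L₀} φ″² dx + λ₂∫_{L₀}^{L} u″² dx + ∫₀^{L₀} (ω′ + φ′²/2)² dx + ∫_{L₀}^{L} (v′ + u′²/2)² dx ≤ C (G + G²), where G = ∫₀^{L₀} g₁² dx + ∫_{L₀}^{L} g₃² dx. In particular, the set of stationary points of the transmission beam system with g₂ = g₄ = 0 is bounded in the energy norm. -/
/-!
The second equation on each side says that the axial stress `ω' + φ'²/2` (resp. `v' + u'²/2`) is
constant, and the transmission conditions make the two constants a single `σ`. Integrating the
stress over `[0, L]` with `ω(0) = v(L) = 0` gives `∫ φ'² + ∫ u'² = 2Lσ`, so the stress part of the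
energy is `Lσ²`. The beam equations then reduce to `λ w⁗ - σ w'' = g`; testing them against the
deflection, the boundary terms vanish at `0` and `L` and cancel at `L₀` by the transmission
conditions, so `λ₁∫φ''² + λ₂∫u''² + 2Lσ² = ∫ g₁φ + ∫ g₃u`. The glued deflection vanishes to first
order at `0`, so two Poincaré inequalities bound `∫ φ² + ∫ u²` by `4L⁴ (∫φ''² + ∫u''²)`, and
Young's inequality with weight `K = 4L⁴ / min λ₁ λ₂` absorbs this into the bending energy, leaving
an energy of at most `K G`.
-/

open MeasureTheory Set

section IntegralInequalities

variable {a b : ℝ} {f g : ℝ → ℝ}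

lemma two_mul_mul_integral_mul_le (hab : a ≤ b) (hf : ContinuousOn f (Icc a b))
    (hg : ContinuousOn g (Icc a b)) (t : ℝ) :
    2 * t * ∫ x in a..b, f x * g x ≤ t ^ 2 * (∫ x in a..b, f x ^ 2) + ∫ x in a..b, g x ^ 2 := by
  have hint {h : ℝ → ℝ} (hh : ContinuousOn h (Icc a b)) : IntervalIntegrable h volume a b :=
    (uIcc_of_le hab ▸ hh).intervalIntegrable
  calc 2 * t * ∫ x in a..b, f x * g x = ∫ x in a..b, 2 * (t * f x) * g x := by
        rw [← intervalIntegral.integral_const_mul]; simp only [mul_assoc]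
    _ ≤ ∫ x in a..b, (t ^ 2 * f x ^ 2 + g x ^ 2) :=
        intervalIntegral.integral_mono_on hab
          (hint (continuousOn_const.mul (continuousOn_const.mul hf) |>.mul hg))
          (hint ((continuousOn_const.mul (hf.pow 2)).add (hg.pow 2)))
          fun x _ => (two_mul_le_add_sq (t * f x) (g x)).trans_eq (by ring)
    _ = t ^ 2 * (∫ x in a..b, f x ^ 2) + ∫ x in a..b, g x ^ 2 := by
        rw [intervalIntegral.integral_add (f := fun x => t ^ 2 * f x ^ 2) (g := fun x => g x ^ 2)
          (hint (continuousOn_const.mul (hf.pow 2))) (hint (hg.pow 2)),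
          intervalIntegral.integral_const_mul]

lemma sq_integral_mul_le (hab : a ≤ b) (hf : ContinuousOn f (Icc a b))
    (hg : ContinuousOn g (Icc a b)) :
    (∫ x in a..b, f x * g x) ^ 2 ≤ (∫ x in a..b, f x ^ 2) * ∫ x in a..b, g x ^ 2 := by
  have hquad : ∀ t : ℝ, 0 ≤ (∫ x in a..b, f x ^ 2) * (t * t)
      + (-2 * ∫ x in a..b, f x * g x) * t + ∫ x in a..b, g x ^ 2 := fun t => by
    linear_combination two_mul_mul_integral_mul_le hab hf hg t
  have h := discrim_le_zero hquad
  rw [discrim] at h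
  linarith

lemma sq_sub_le_mul_integral_sq_deriv (hf : ContDiff ℝ 1 f) {x : ℝ} (hx : x ∈ Icc a b) :
    (f x - f a) ^ 2 ≤ (b - a) * ∫ t in a..b, deriv f t ^ 2 := by
  have hf' : Continuous (deriv f) := hf.continuous_deriv le_rfl
  have hftc : f x - f a = ∫ t in a..x, 1 * deriv f t := by
    simp only [one_mul]
    exact (intervalIntegral.integral_deriv_eq_sub (fun t _ => hf.differentiable one_ne_zero t)
      (hf'.intervalIntegrable a x)).symm
  have hmono : ∫ t in a..x, deriv f t ^ 2 ≤ ∫ t in a..b, deriv f t ^ 2 :=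
    intervalIntegral.integral_mono_interval le_rfl hx.1 hx.2
      (Filter.Eventually.of_forall fun t => sq_nonneg _) ((hf'.pow 2).intervalIntegrable a b)
  calc (f x - f a) ^ 2
      ≤ (∫ t in a..x, (1 : ℝ) ^ 2) * ∫ t in a..x, deriv f t ^ 2 := hftc ▸
        sq_integral_mul_le hx.1 continuousOn_const hf'.continuousOn
    _ ≤ (b - a) * ∫ t in a..b, deriv f t ^ 2 := by
        rw [one_pow, intervalIntegral.integral_const, smul_eq_mul, mul_one]
        exact mul_le_mul (by linarith [hx.2]) hmono
          (intervalIntegral.integral_nonneg hx.1 fun t _ => sq_nonneg _) (by linarith [hx.1, hx.2])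

end IntegralInequalities

section Poincare

variable {a b c : ℝ} {f g : ℝ → ℝ}

lemma integral_sq_le_of_sq_le (hab : a ≤ b) {M : ℝ} (hM : ∀ x ∈ Icc a b, f x ^ 2 ≤ M) :
    ∫ x in a..b, f x ^ 2 ≤ (b - a) * M := by
  have h := intervalIntegral.norm_integral_le_of_norm_le_const (f := fun x => f x ^ 2) (C := M)
    fun x hx => by
      rw [uIoc_of_le hab] at hx
      simpa only [Real.norm_eq_abs, abs_sq] using hM x (Ioc_subset_Icc_self hx)
  rw [abs_of_nonneg (sub_nonneg.mpr hab), mul_comm] at h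
  exact (le_abs_self _).trans h

lemma integral_sq_add_integral_sq_le (hab : a ≤ b) (hbc : b ≤ c) (hf : ContDiff ℝ 1 f)
    (hg : ContDiff ℝ 1 g) (hfa : f a = 0) (hfg : f b = g b) :
    (∫ x in a..b, f x ^ 2) + ∫ x in b..c, g x ^ 2 ≤
      2 * (c - a) ^ 2 * ((∫ x in a..b, deriv f x ^ 2) + ∫ x in b..c, deriv g x ^ 2) := by
  set F := ∫ x in a..b, deriv f x ^ 2
  set H := ∫ x in b..c, deriv g x ^ 2
  have hF : 0 ≤ F := intervalIntegral.integral_nonneg hab fun x _ => sq_nonneg _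
  have hH : 0 ≤ H := intervalIntegral.integral_nonneg hbc fun x _ => sq_nonneg _
  have hf_sq (x) (hx : x ∈ Icc a b) : f x ^ 2 ≤ (b - a) * F := by
    simpa [hfa] using sq_sub_le_mul_integral_sq_deriv hf hx
  have hg_sq (x) (hx : x ∈ Icc b c) : g x ^ 2 ≤ 2 * (c - a) * (F + H) := by
    have hgb : g b ^ 2 ≤ (b - a) * F := hfg ▸ hf_sq b ⟨hab, le_rfl⟩
    have hgx := sq_sub_le_mul_integral_sq_deriv hg hx
    nlinarith [sq_nonneg (g x - 2 * g b)]
  have hf_sq' (x) (hx : x ∈ Icc a b) : f x ^ 2 ≤ 2 * (c - a) * (F + H) :=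
    (hf_sq x hx).trans (by nlinarith)
  have := integral_sq_le_of_sq_le hab hf_sq'
  have := integral_sq_le_of_sq_le hbc hg_sq
  nlinarith

end Poincare

lemma eq_left_of_deriv_eq_zero_on_Ioo {a b : ℝ} {f : ℝ → ℝ} (hf : Differentiable ℝ f)
    (hf' : ∀ x ∈ Ioo a b, deriv f x = 0) {x : ℝ} (hx : x ∈ Icc a b) : f x = f a := by
  have hzero (y) (hy : y ∈ interior (Icc a b)) : deriv f y = 0 :=
    hf' y (by rwa [interior_Icc] at hy)
  have hmono : MonotoneOn f (Icc a b) := monotoneOn_of_deriv_nonneg (convex_Icc a b)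
    hf.continuous.continuousOn hf.differentiableOn fun y hy => (hzero y hy).ge
  have hanti : AntitoneOn f (Icc a b) := antitoneOn_of_deriv_nonpos (convex_Icc a b)
    hf.continuous.continuousOn hf.differentiableOn fun y hy => (hzero y hy).le
  have ha : a ∈ Icc a b := left_mem_Icc.mpr (hx.1.trans hx.2)
  exact le_antisymm (hanti ha hx hx.1) (hmono ha hx hx.1)

lemma deriv_mul_of_deriv_eq_zero {p s : ℝ → ℝ} {x : ℝ} (hp : DifferentiableAt ℝ p x)
    (hs : DifferentiableAt ℝ s x) (hs' : deriv s x = 0) :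
    deriv (fun y => p y * s y) x = deriv p x * s x := by
  rw [deriv_fun_mul hp hs, hs', mul_zero, add_zero]

lemma ContDiff.hasDerivAt_iteratedDeriv {n : WithTop ℕ∞} {f : ℝ → ℝ} (hf : ContDiff ℝ n f)
    {k : ℕ} (hk : k < n) (x : ℝ) :
    HasDerivAt (iteratedDeriv k f) (iteratedDeriv (k + 1) f x) x := by
  rw [iteratedDeriv_succ]
  exact (hf.differentiable_iteratedDeriv k hk x).hasDerivAt

lemma iteratedDeriv_two_eq_deriv_deriv {𝕜 F : Type*} [NontriviallyNormedField 𝕜]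
    [NormedAddCommGroup F] [NormedSpace 𝕜 F] (f : 𝕜 → F) :
    iteratedDeriv 2 f = deriv (deriv f) := by
  rw [iteratedDeriv_succ, iteratedDeriv_one]

lemma integral_sq_of_eqOn_Icc {a b σ : ℝ} {f : ℝ → ℝ} (hab : a ≤ b)
    (hf : ∀ x ∈ Icc a b, f x = σ) :
    ∫ x in a..b, f x ^ 2 = (b - a) * σ ^ 2 := by
  rw [intervalIntegral.integral_congr (g := fun _ => σ ^ 2)
      fun x hx => by rw [hf x (uIcc_of_le hab ▸ hx)],
    intervalIntegral.integral_const, smul_eq_mul]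

lemma integral_deriv_add_sq_div_two {f h : ℝ → ℝ} (hf : ContDiff ℝ 1 f) (hh : ContDiff ℝ 1 h)
    (a b : ℝ) :
    ∫ x in a..b, (deriv h x + deriv f x ^ 2 / 2) =
      h b - h a + (∫ x in a..b, deriv f x ^ 2) / 2 := by
  have hf' := hf.continuous_deriv le_rfl
  have hh' := hh.continuous_deriv le_rfl
  rw [intervalIntegral.integral_add (f := deriv h) (g := fun x => deriv f x ^ 2 / 2)
      (hh'.intervalIntegrable a b)
      ((hf'.pow 2).div_const 2 |>.intervalIntegrable a b),
    intervalIntegral.integral_deriv_eq_sub (fun x _ => hh.differentiable one_ne_zero x)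
      (hh'.intervalIntegrable a b),
    intervalIntegral.integral_div]

/-- Shear force times deflection minus bending moment times slope: the boundary term produced by
integrating `(lam f⁗ - σ f'') f` by parts twice. -/
noncomputable def beamBoundaryTerm (lam σ : ℝ) (f : ℝ → ℝ) (x : ℝ) : ℝ :=
  (lam * iteratedDeriv 3 f x - σ * deriv f x) * f x - lam * iteratedDeriv 2 f x * deriv f x

lemma integral_beam_mul_self {f : ℝ → ℝ} (hf : ContDiff ℝ 4 f) (lam σ a b : ℝ) :
    ∫ x in a..b, (lam * iteratedDeriv 4 f x - σ * iteratedDeriv 2 f x) * f x =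
      beamBoundaryTerm lam σ f b - beamBoundaryTerm lam σ f a
        + lam * (∫ x in a..b, iteratedDeriv 2 f x ^ 2) + σ * ∫ x in a..b, deriv f x ^ 2 := by
  have d0 (x : ℝ) : HasDerivAt f (deriv f x) x := (hf.differentiable (by norm_num) x).hasDerivAt
  have d1 (x : ℝ) : HasDerivAt (deriv f) (iteratedDeriv 2 f x) x := by
    simpa using hf.hasDerivAt_iteratedDeriv (k := 1) (by norm_num) x
  have d2 (x : ℝ) := hf.hasDerivAt_iteratedDeriv (k := 2) (by norm_num) x
  have d3 (x : ℝ) := hf.hasDerivAt_iteratedDeriv (k := 3) (by norm_num) x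
  set density := fun x => lam * iteratedDeriv 2 f x ^ 2 + σ * deriv f x ^ 2
  have hW (x : ℝ) : HasDerivAt (beamBoundaryTerm lam σ f)
      ((lam * iteratedDeriv 4 f x - σ * iteratedDeriv 2 f x) * f x - density x) x := by
    refine (((((d3 x).const_mul lam).fun_sub ((d1 x).const_mul σ)).fun_mul (d0 x)).fun_sub
      (((d2 x).const_mul lam).fun_mul (d1 x))).congr_deriv ?_
    simp only [density]
    ring
  have c4 := hf.continuous_iteratedDeriv 4 le_rfl
  have c2 := hf.continuous_iteratedDeriv 2 (by norm_num)
  have c1 := hf.continuous_deriv (by norm_num)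
  have c0 := hf.continuous
  have hint {h : ℝ → ℝ} (hh : Continuous h) : IntervalIntegrable h volume a b :=
    hh.intervalIntegrable a b
  calc ∫ x in a..b, (lam * iteratedDeriv 4 f x - σ * iteratedDeriv 2 f x) * f x
      = ∫ x in a..b, (((lam * iteratedDeriv 4 f x - σ * iteratedDeriv 2 f x) * f x
          - density x) + density x) :=
        intervalIntegral.integral_congr fun x _ => by ring
    _ = _ := by
      rw [intervalIntegral.integral_add (hint (by fun_prop)) (hint (by fun_prop)),
        intervalIntegral.integral_eq_sub_of_hasDerivAt (fun x _ => hW x) (hint (by fun_prop)),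
        intervalIntegral.integral_add (hint (by fun_prop)) (hint (by fun_prop)),
        intervalIntegral.integral_const_mul, intervalIntegral.integral_const_mul]
      ring

lemma differentiable_stress {f h : ℝ → ℝ} (hf : ContDiff ℝ 2 f) (hh : ContDiff ℝ 2 h) :
    Differentiable ℝ fun y => deriv h y + deriv f y ^ 2 / 2 := by
  have hf' := hf.differentiable_iteratedDeriv 1 (by norm_num)
  have hh' := hh.differentiable_iteratedDeriv 1 (by norm_num)
  rw [iteratedDeriv_one] at hf' hh'
  fun_prop

lemma beam_eq_of_stress_eq {lam σ x : ℝ} {f h g : ℝ → ℝ} (hf : ContDiff ℝ 2 f)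
    (hh : ContDiff ℝ 2 h)
    (heq : lam * iteratedDeriv 4 f x
      - deriv (fun y => deriv f y * (deriv h y + deriv f y ^ 2 / 2)) x = g x)
    (hstress : deriv (fun y => deriv h y + deriv f y ^ 2 / 2) x = 0)
    (hσ : deriv h x + deriv f x ^ 2 / 2 = σ) :
    lam * iteratedDeriv 4 f x - σ * iteratedDeriv 2 f x = g x := by
  have hf' := hf.differentiable_iteratedDeriv 1 (by norm_num)
  rw [iteratedDeriv_one] at hf'
  rw [deriv_mul_of_deriv_eq_zero (hf' x) (differentiable_stress hf hh x) hstress, hσ,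
    ← iteratedDeriv_two_eq_deriv_deriv] at heq
  linarith

/-- `(φ, ω)` on `[0, L₀]` and `(u, v)` on `[L₀, L]` form a stationary solution of the transmission
beam system with transverse forcings `g₁`, `g₃`. -/
structure IsStationaryTransmission (L₀ L lam₁ lam₂ : ℝ) (g₁ g₃ φ ω u v : ℝ → ℝ) : Prop where
  contDiff_φ : ContDiff ℝ 4 φ
  contDiff_ω : ContDiff ℝ 2 ω
  contDiff_u : ContDiff ℝ 4 u
  contDiff_v : ContDiff ℝ 2 v
  eq_φ : ∀ x ∈ Ioo 0 L₀, lam₁ * iteratedDeriv 4 φ x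
    - deriv (fun y => deriv φ y * (deriv ω y + deriv φ y ^ 2 / 2)) x = g₁ x
  eq_ω : ∀ x ∈ Ioo 0 L₀, deriv (fun y => deriv ω y + deriv φ y ^ 2 / 2) x = 0
  eq_u : ∀ x ∈ Ioo L₀ L, lam₂ * iteratedDeriv 4 u x
    - deriv (fun y => deriv u y * (deriv v y + deriv u y ^ 2 / 2)) x = g₃ x
  eq_v : ∀ x ∈ Ioo L₀ L, deriv (fun y => deriv v y + deriv u y ^ 2 / 2) x = 0
  φ_zero : φ 0 = 0
  deriv_φ_zero : deriv φ 0 = 0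
  ω_zero : ω 0 = 0
  u_right : u L = 0
  iteratedDeriv_two_u_right : iteratedDeriv 2 u L = 0
  v_right : v L = 0
  φ_eq_u : φ L₀ = u L₀
  ω_eq_v : ω L₀ = v L₀
  deriv_φ_eq_deriv_u : deriv φ L₀ = deriv u L₀
  moment_eq : lam₁ * iteratedDeriv 2 φ L₀ = lam₂ * iteratedDeriv 2 u L₀
  deriv_ω_eq_deriv_v : deriv ω L₀ = deriv v L₀
  shear_eq : lam₁ * iteratedDeriv 3 φ L₀ = lam₂ * iteratedDeriv 3 u L₀

namespace IsStationaryTransmission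

variable {L₀ L lam₁ lam₂ : ℝ} {g₁ g₃ φ ω u v : ℝ → ℝ}

lemma exists_stress (hs : IsStationaryTransmission L₀ L lam₁ lam₂ g₁ g₃ φ ω u v)
    (hL₀ : 0 ≤ L₀) :
    ∃ σ : ℝ, (∀ x ∈ Icc 0 L₀, deriv ω x + deriv φ x ^ 2 / 2 = σ) ∧
      ∀ x ∈ Icc L₀ L, deriv v x + deriv u x ^ 2 / 2 = σ := by
  have hφ := differentiable_stress (hs.contDiff_φ.of_le (by norm_num)) hs.contDiff_ω
  have hu := differentiable_stress (hs.contDiff_u.of_le (by norm_num)) hs.contDiff_v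
  refine ⟨deriv ω L₀ + deriv φ L₀ ^ 2 / 2, fun x hx => ?_, fun x hx => ?_⟩
  · rw [eq_left_of_deriv_eq_zero_on_Ioo hφ hs.eq_ω hx,
      eq_left_of_deriv_eq_zero_on_Ioo hφ hs.eq_ω (right_mem_Icc.mpr hL₀)]
  · rw [eq_left_of_deriv_eq_zero_on_Ioo hu hs.eq_v hx, hs.deriv_ω_eq_deriv_v,
      hs.deriv_φ_eq_deriv_u]

variable {σ : ℝ}

lemma energy_balance (hs : IsStationaryTransmission L₀ L lam₁ lam₂ g₁ g₃ φ ω u v)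
    (hL₀ : 0 ≤ L₀) (hL : L₀ ≤ L)
    (hσφ : ∀ x ∈ Icc 0 L₀, deriv ω x + deriv φ x ^ 2 / 2 = σ)
    (hσu : ∀ x ∈ Icc L₀ L, deriv v x + deriv u x ^ 2 / 2 = σ) :
    lam₁ * (∫ x in 0..L₀, iteratedDeriv 2 φ x ^ 2) + lam₂ * (∫ x in L₀..L, iteratedDeriv 2 u x ^ 2)
        + σ * ((∫ x in 0..L₀, deriv φ x ^ 2) + ∫ x in L₀..L, deriv u x ^ 2) =
      (∫ x in 0..L₀, g₁ x * φ x) + ∫ x in L₀..L, g₃ x * u x := by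
  have hφ : ∫ x in 0..L₀, g₁ x * φ x =
      ∫ x in 0..L₀, (lam₁ * iteratedDeriv 4 φ x - σ * iteratedDeriv 2 φ x) * φ x :=
    intervalIntegral.integral_congr_Ioo_of_le hL₀ fun x hx => by
      rw [beam_eq_of_stress_eq (hs.contDiff_φ.of_le (by norm_num)) hs.contDiff_ω (hs.eq_φ x hx)
        (hs.eq_ω x hx) (hσφ x (Ioo_subset_Icc_self hx))]
  have hu : ∫ x in L₀..L, g₃ x * u x =
      ∫ x in L₀..L, (lam₂ * iteratedDeriv 4 u x - σ * iteratedDeriv 2 u x) * u x :=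
    intervalIntegral.integral_congr_Ioo_of_le hL fun x hx => by
      rw [beam_eq_of_stress_eq (hs.contDiff_u.of_le (by norm_num)) hs.contDiff_v (hs.eq_u x hx)
        (hs.eq_v x hx) (hσu x (Ioo_subset_Icc_self hx))]
  have hW₀ : beamBoundaryTerm lam₁ σ φ 0 = 0 := by
    simp [beamBoundaryTerm, hs.φ_zero, hs.deriv_φ_zero]
  have hW : beamBoundaryTerm lam₂ σ u L = 0 := by
    simp [beamBoundaryTerm, hs.u_right, hs.iteratedDeriv_two_u_right]
  have hWL₀ : beamBoundaryTerm lam₁ σ φ L₀ = beamBoundaryTerm lam₂ σ u L₀ := by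
    simp only [beamBoundaryTerm, hs.φ_eq_u, hs.deriv_φ_eq_deriv_u]
    linear_combination u L₀ * hs.shear_eq - deriv u L₀ * hs.moment_eq
  rw [hφ, hu, integral_beam_mul_self hs.contDiff_φ,
    integral_beam_mul_self hs.contDiff_u, hW₀, hW, hWL₀]
  ring

lemma integral_deriv_sq_add_integral_deriv_sq
    (hs : IsStationaryTransmission L₀ L lam₁ lam₂ g₁ g₃ φ ω u v) (hL₀ : 0 ≤ L₀) (hL : L₀ ≤ L)
    (hσφ : ∀ x ∈ Icc 0 L₀, deriv ω x + deriv φ x ^ 2 / 2 = σ)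
    (hσu : ∀ x ∈ Icc L₀ L, deriv v x + deriv u x ^ 2 / 2 = σ) :
    (∫ x in 0..L₀, deriv φ x ^ 2) + ∫ x in L₀..L, deriv u x ^ 2 = 2 * L * σ := by
  have hφ := integral_deriv_add_sq_div_two (hs.contDiff_φ.of_le (by norm_num))
    (hs.contDiff_ω.of_le (by norm_num)) 0 L₀
  have hu := integral_deriv_add_sq_div_two (hs.contDiff_u.of_le (by norm_num))
    (hs.contDiff_v.of_le (by norm_num)) L₀ L
  rw [intervalIntegral.integral_congr (g := fun _ => σ) (uIcc_of_le hL₀ ▸ hσφ),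
    intervalIntegral.integral_const, smul_eq_mul] at hφ
  rw [intervalIntegral.integral_congr (g := fun _ => σ) (uIcc_of_le hL ▸ hσu),
    intervalIntegral.integral_const, smul_eq_mul] at hu
  linear_combination -2 * hφ - 2 * hu + 2 * hs.ω_zero - 2 * hs.v_right - 2 * hs.ω_eq_v

lemma integral_sq_deflection_le (hs : IsStationaryTransmission L₀ L lam₁ lam₂ g₁ g₃ φ ω u v)
    (hL₀ : 0 ≤ L₀) (hL : L₀ ≤ L) :
    (∫ x in 0..L₀, φ x ^ 2) + ∫ x in L₀..L, u x ^ 2 ≤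
      4 * L ^ 4 *
        ((∫ x in 0..L₀, iteratedDeriv 2 φ x ^ 2) + ∫ x in L₀..L, iteratedDeriv 2 u x ^ 2) := by
  have hdeflection := integral_sq_add_integral_sq_le hL₀ hL (hs.contDiff_φ.of_le (by norm_num))
    (hs.contDiff_u.of_le (by norm_num)) hs.φ_zero hs.φ_eq_u
  have hslope := integral_sq_add_integral_sq_le hL₀ hL
    (ContDiff.deriv' (n := 1) (hs.contDiff_φ.of_le (by norm_num)))
    (ContDiff.deriv' (n := 1) (hs.contDiff_u.of_le (by norm_num))) hs.deriv_φ_zero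
    hs.deriv_φ_eq_deriv_u
  rw [← iteratedDeriv_two_eq_deriv_deriv, ← iteratedDeriv_two_eq_deriv_deriv] at hslope
  rw [sub_zero] at hdeflection hslope
  calc _ ≤ _ := hdeflection
    _ ≤ 2 * L ^ 2 * (2 * L ^ 2 * ((∫ x in 0..L₀, iteratedDeriv 2 φ x ^ 2)
          + ∫ x in L₀..L, iteratedDeriv 2 u x ^ 2)) := by gcongr
    _ = _ := by ring

lemma energy_le (hs : IsStationaryTransmission L₀ L lam₁ lam₂ g₁ g₃ φ ω u v)
    (hg₁ : ContinuousOn g₁ (Icc 0 L₀)) (hg₃ : ContinuousOn g₃ (Icc L₀ L))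
    (hL₀ : 0 < L₀) (hL : L₀ ≤ L) (hlam₁ : 0 < lam₁) (hlam₂ : 0 < lam₂) :
    lam₁ * (∫ x in 0..L₀, iteratedDeriv 2 φ x ^ 2) + lam₂ * (∫ x in L₀..L, iteratedDeriv 2 u x ^ 2)
        + (∫ x in 0..L₀, (deriv ω x + deriv φ x ^ 2 / 2) ^ 2)
        + (∫ x in L₀..L, (deriv v x + deriv u x ^ 2 / 2) ^ 2) ≤
      4 * L ^ 4 / min lam₁ lam₂ * ((∫ x in 0..L₀, g₁ x ^ 2) + ∫ x in L₀..L, g₃ x ^ 2) := by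
  obtain ⟨σ, hσφ, hσu⟩ := hs.exists_stress hL₀.le
  have hbalance := hs.energy_balance hL₀.le hL hσφ hσu
  rw [hs.integral_deriv_sq_add_integral_deriv_sq hL₀.le hL hσφ hσu] at hbalance
  rw [integral_sq_of_eqOn_Icc hL₀.le hσφ, integral_sq_of_eqOn_Icc hL hσu]
  have hdeflection := hs.integral_sq_deflection_le hL₀.le hL
  set K := 4 * L ^ 4 / min lam₁ lam₂
  set A := ∫ x in 0..L₀, iteratedDeriv 2 φ x ^ 2
  set B := ∫ x in L₀..L, iteratedDeriv 2 u x ^ 2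
  have hm : 0 < min lam₁ lam₂ := lt_min hlam₁ hlam₂
  have hL' : 0 < L := hL₀.trans_le hL
  have hK : 0 < K := by positivity
  have hKm : K * min lam₁ lam₂ = 4 * L ^ 4 := div_mul_cancel₀ _ hm.ne'
  have hbending : min lam₁ lam₂ * (A + B) ≤ lam₁ * A + lam₂ * B := by
    have hA : 0 ≤ A := intervalIntegral.integral_nonneg hL₀.le fun x _ => sq_nonneg _
    have hB : 0 ≤ B := intervalIntegral.integral_nonneg hL fun x _ => sq_nonneg _
    nlinarith [min_le_left lam₁ lam₂, min_le_right lam₁ lam₂]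
  have hdeflection_le : (∫ x in 0..L₀, φ x ^ 2) + ∫ x in L₀..L, u x ^ 2 ≤
      K * (lam₁ * A + lam₂ * B) :=
    calc _ ≤ 4 * L ^ 4 * (A + B) := hdeflection
      _ = K * (min lam₁ lam₂ * (A + B)) := by rw [← hKm]; ring
      _ ≤ K * (lam₁ * A + lam₂ * B) := mul_le_mul_of_nonneg_left hbending hK.le
  have hwork₁ := two_mul_mul_integral_mul_le hL₀.le hg₁ hs.contDiff_φ.continuous.continuousOn K
  have hwork₃ := two_mul_mul_integral_mul_le hL hg₃ hs.contDiff_u.continuous.continuousOn K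
  refine le_of_mul_le_mul_left ?_ hK
  nlinarith [mul_nonneg hK.le (mul_nonneg hL'.le (sq_nonneg σ))]

end IsStationaryTransmission

/-- Boundedness of the set of stationary points of the transmission beam system with
`g₂ = g₄ = 0`: the potential part of the energy of any stationary solution is bounded by
`C(G + G²)` where `G` collects the `L²`-norms of the forcings. -/
theorem stmt_19 (L₀ L lam₁ lam₂ : ℝ)
    (hL₀ : 0 < L₀) (hL : L₀ < L) (hlam₁ : 0 < lam₁) (hlam₂ : 0 < lam₂) :
    ∃ C > (0:ℝ), ∀ g₁ g₃ : ℝ → ℝ,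
      ContinuousOn g₁ (Set.Icc 0 L₀) → ContinuousOn g₃ (Set.Icc L₀ L) →
      ∀ φ ω u v : ℝ → ℝ,
        (∀ n : ℕ, ContDiff ℝ n φ) → (∀ n : ℕ, ContDiff ℝ n ω) →
        (∀ n : ℕ, ContDiff ℝ n u) → (∀ n : ℕ, ContDiff ℝ n v) →
        -- stationary equations on (0, L₀)
        (∀ x ∈ Set.Ioo (0:ℝ) L₀,
          lam₁ * iteratedDeriv 4 φ x
            - deriv (fun y => deriv φ y * (deriv ω y + (deriv φ y) ^ 2 / 2)) x = g₁ x) →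
        (∀ x ∈ Set.Ioo (0:ℝ) L₀,
          deriv (fun y => deriv ω y + (deriv φ y) ^ 2 / 2) x = 0) →
        -- stationary equations on (L₀, L)
        (∀ x ∈ Set.Ioo L₀ L,
          lam₂ * iteratedDeriv 4 u x
            - deriv (fun y => deriv u y * (deriv v y + (deriv u y) ^ 2 / 2)) x = g₃ x) →
        (∀ x ∈ Set.Ioo L₀ L,
          deriv (fun y => deriv v y + (deriv u y) ^ 2 / 2) x = 0) →
        -- boundary conditions
        φ 0 = 0 → deriv φ 0 = 0 → ω 0 = 0 →
        u L = 0 → iteratedDeriv 2 u L = 0 → v L = 0 →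
        -- transmission conditions
        φ L₀ = u L₀ → ω L₀ = v L₀ → deriv φ L₀ = deriv u L₀ →
        lam₁ * iteratedDeriv 2 φ L₀ = lam₂ * iteratedDeriv 2 u L₀ →
        deriv ω L₀ = deriv v L₀ →
        lam₁ * iteratedDeriv 3 φ L₀ = lam₂ * iteratedDeriv 3 u L₀ →
        lam₁ * (∫ x in (0:ℝ)..L₀, (iteratedDeriv 2 φ x) ^ 2)
          + lam₂ * (∫ x in L₀..L, (iteratedDeriv 2 u x) ^ 2)
          + (∫ x in (0:ℝ)..L₀, (deriv ω x + (deriv φ x) ^ 2 / 2) ^ 2)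
          + (∫ x in L₀..L, (deriv v x + (deriv u x) ^ 2 / 2) ^ 2)
        ≤ C * (((∫ x in (0:ℝ)..L₀, (g₁ x) ^ 2) + (∫ x in L₀..L, (g₃ x) ^ 2))
            + ((∫ x in (0:ℝ)..L₀, (g₁ x) ^ 2) + (∫ x in L₀..L, (g₃ x) ^ 2)) ^ 2) := by
  have hC : 0 < 4 * L ^ 4 / min lam₁ lam₂ := by
    have := hL₀.trans hL; have := lt_min hlam₁ hlam₂; positivity
  refine ⟨_, hC, fun g₁ g₃ hg₁ hg₃ φ ω u v hφ hω hu hv eqφ eqω equ eqv φ0 dφ0 ω0 uL d2uL vL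
    φu ωv dφu d2φu dωv d3φu => ?_⟩
  have hs : IsStationaryTransmission L₀ L lam₁ lam₂ g₁ g₃ φ ω u v :=
    ⟨hφ 4, hω 2, hu 4, hv 2, eqφ, eqω, equ, eqv, φ0, dφ0, ω0, uL, d2uL, vL, φu, ωv, dφu, d2φu,
      dωv, d3φu⟩
  calc _ ≤ _ := hs.energy_le hg₁ hg₃ hL₀ hL.le hlam₁ hlam₂
    _ ≤ _ := mul_le_mul_of_nonneg_left (le_add_of_nonneg_right (sq_nonneg _)) hC.le
end
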